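/- Let H be a finite group of odd order such that d(H) ≤ 1. Then the nim-number of the achievement game GEN((Z/2 × Z/2) × H) is *1. -/

import Mathlib

universe u

/-- Combinatorial pregames (removed from Mathlib; restored with the old definition). -/
inductive SetTheory.PGame : Type (u + 1)
  | mk : ∀ α β : Type u, (α → SetTheory.PGame) → (β → SetTheory.PGame) → SetTheory.PGame

/-- The zero pregame, with no options (as in the old Mathlib). -/
instance SetTheory.PGame.instZeroPGame : Zero SetTheory.PGame :=
  ⟨⟨PEmpty, PEmpty, PEmpty.elim, PEmpty.elim⟩⟩

/-- Nimbers: a type synonym for ordinals (removed from Mathlib; restored). -/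
def Nimber : Type (u + 1) := Ordinal.{u}

noncomputable instance Nimber.instLinearOrder : LinearOrder Nimber.{u} :=
  inferInstanceAs (LinearOrder Ordinal.{u})

noncomputable instance Nimber.instInfSet : InfSet Nimber.{u} :=
  inferInstanceAs (InfSet Ordinal.{u})

/-- The identity map from ordinals to nimbers. -/
def Nimber.toNimber : Ordinal.{u} ≃o Nimber.{u} := OrderIso.refl _

prefix:75 "∗" => Nimber.toNimber

/-- The Grundy value of a pregame: the mex of the Grundy values of its left options. -/
noncomputable def SetTheory.PGame.grundyValue : SetTheory.PGame.{u} → Nimber.{u}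
  | mk _ _ L _ => sInf (Set.range fun i => SetTheory.PGame.grundyValue (L i))ᶜ

open SetTheory Nimber
open scoped Classical

/-- The achievement game `GEN(G)` of Anderson and Harary: positions are (finite) subsets
of the finite group `G`; a position that generates `G` is terminal, and otherwise the
options are obtained by selecting a previously-unselected element of `G`.  The game is
impartial, so the left and right options agree. -/
noncomputable def genGame {G : Type} [Group G] [Fintype G] (P : Finset G) : PGame :=
  if Subgroup.closure (P : Set G) = ⊤ then 0
  else
    PGame.mk {g : G // g ∉ P} {g : G // g ∉ P}
      (fun g => genGame (insert g.1 P)) (fun g => genGame (insert g.1 P))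
termination_by Fintype.card G - P.card
decreasing_by
  all_goals
    have h1 : (insert g.1 P).card = P.card + 1 := Finset.card_insert_of_notMem g.2
    have h2 : (insert g.1 P).card ≤ Fintype.card G := Finset.card_le_univ _
    omega

/-- The nim-number of the achievement game `GEN(G)`, i.e. the Sprague-Grundy value of the
starting position `∅`. -/
noncomputable def nimGEN (G : Type) [Group G] [Fintype G] : Nimber :=
  PGame.grundyValue (genGame (∅ : Finset G))

/-- `d(G)`: the minimal cardinality of a generating set of `G`. -/
noncomputable def minGen (G : Type) [Group G] : ℕ :=
  sInf {n : ℕ | ∃ S : Finset G, S.card = n ∧ Subgroup.closure (S : Set G) = ⊤}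

/-!
Let `K` be a Klein four-group and `H` a cyclic group of odd order, and call a position of
`GEN(K × H)` non-terminal if it does not generate. Downward induction on the position shows that a
non-terminal position `P` has value `∗1` exactly when `|P|` is even, and value `∗0` when `|P|` is
odd and `⟨P⟩ ≤ 1 × H`. Two facts drive the induction. Since `K` is not cyclic, no single element
completes a subset of `1 × H` to a generating set, while if `⟨P⟩` meets `K` nontrivially some
`(x, y)` with `y²` generating `H` completes `P`. And `⟨P⟩` has odd order exactly when
`⟨P⟩ ≤ 1 × H`, so comparing the parities of `|P|` and `|⟨P⟩|` tells when an element of `⟨P⟩ \ P`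
is available: adding it keeps the subgroup and flips the parity. The empty position is even.
-/

namespace SetTheory.PGame

variable {α β : Type u} {L : α → PGame.{u}} {R : β → PGame.{u}}

theorem grundyValue_mk_ne (i : α) : grundyValue (L i) ≠ grundyValue (mk α β L R) := by
  let f : α → Ordinal.{u} := fun i => grundyValue (L i)
  obtain ⟨a, ha⟩ := Ordinal.bddAbove_of_small (s := Set.range f)
  exact fun h => csInf_mem (s := (Set.range f)ᶜ)
    ⟨Order.succ a, fun h => (Order.lt_succ a).not_ge (ha h)⟩ ⟨i, h⟩

theorem grundyValue_mk_le {o : Nimber.{u}} (h : ∀ i, grundyValue (L i) ≠ o) :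
    grundyValue (mk α β L R) ≤ o :=
  @csInf_le' Ordinal.{u} _ _ o fun ⟨i, hi⟩ => h i hi

theorem grundyValue_mk_eq_zero (h : ∀ i, grundyValue (L i) ≠ ∗0) :
    grundyValue (mk α β L R) = ∗0 :=
  le_antisymm (grundyValue_mk_le h) (zero_le (α := Ordinal.{u}))

theorem grundyValue_mk_eq_one (h₀ : ∃ i, grundyValue (L i) = ∗0)
    (h₁ : ∀ i, grundyValue (L i) ≠ ∗1) : grundyValue (mk α β L R) = ∗1 := by
  obtain ⟨i, hi⟩ := h₀
  have hne : grundyValue (mk α β L R) ≠ ∗0 := hi ▸ (grundyValue_mk_ne i).symm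
  exact (grundyValue_mk_le h₁).eq_of_not_lt fun hlt =>
    hne (Order.lt_one_iff (α := Ordinal.{u}).mp hlt)

theorem grundyValue_zero : grundyValue (0 : PGame.{u}) = ∗0 :=
  grundyValue_mk_eq_zero (PEmpty.elim ·)

end SetTheory.PGame

open PGame

section GenGame

variable {G : Type} [Group G] [Fintype G] {P : Finset G}

theorem genGame_of_closure_ne_top (hP : Subgroup.closure (P : Set G) ≠ ⊤) :
    genGame P = PGame.mk {g : G // g ∉ P} {g : G // g ∉ P}
      (fun g => genGame (insert g.1 P)) (fun g => genGame (insert g.1 P)) := by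
  rw [genGame, if_neg hP]

theorem grundyValue_genGame_of_closure_eq_top (hP : Subgroup.closure (P : Set G) = ⊤) :
    grundyValue (genGame P) = ∗0 := by
  rw [genGame, if_pos hP, grundyValue_zero]

theorem grundyValue_genGame_insert_ne (hP : Subgroup.closure (P : Set G) ≠ ⊤) {g : G}
    (hg : g ∉ P) : grundyValue (genGame (insert g P)) ≠ grundyValue (genGame P) := by
  rw [genGame_of_closure_ne_top hP]
  exact grundyValue_mk_ne (L := fun g : {g // g ∉ P} => genGame (insert g.1 P)) ⟨g, hg⟩

theorem grundyValue_genGame_eq_zero (hP : Subgroup.closure (P : Set G) ≠ ⊤)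
    (h : ∀ g ∉ P, grundyValue (genGame (insert g P)) ≠ ∗0) :
    grundyValue (genGame P) = ∗0 := by
  rw [genGame_of_closure_ne_top hP]
  exact grundyValue_mk_eq_zero fun g => h g.1 g.2

theorem grundyValue_genGame_eq_one (hP : Subgroup.closure (P : Set G) ≠ ⊤)
    (h₀ : ∃ g ∉ P, grundyValue (genGame (insert g P)) = ∗0)
    (h₁ : ∀ g ∉ P, grundyValue (genGame (insert g P)) ≠ ∗1) :
    grundyValue (genGame P) = ∗1 := by
  obtain ⟨g, hg, hg₀⟩ := h₀
  rw [genGame_of_closure_ne_top hP]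
  exact grundyValue_mk_eq_one ⟨⟨g, hg⟩, hg₀⟩ fun g => h₁ g.1 g.2

theorem exists_notMem_closure_insert_eq (h : P.card ≠ Nat.card (Subgroup.closure (P : Set G))) :
    ∃ g ∉ P, Subgroup.closure (↑(insert g P) : Set G) = Subgroup.closure (P : Set G) := by
  obtain ⟨g, hgS, hgP⟩ : ∃ g ∈ Subgroup.closure (P : Set G), g ∉ P := by
    by_contra! hsub
    refine h ?_
    rw [← SetLike.coe_sort_coe, Nat.card_coe_set_eq,
      Set.Subset.antisymm (fun g hg => hsub g hg) Subgroup.subset_closure, Set.ncard_coe_finset]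
  refine ⟨g, hgP, le_antisymm ?_ (Subgroup.closure_mono (Finset.subset_insert g P))⟩
  rw [Subgroup.closure_le, Finset.coe_insert, Set.insert_subset_iff]
  exact ⟨hgS, Subgroup.subset_closure⟩

end GenGame

theorem isCyclic_of_minGen_le_one {G : Type} [Group G] [Fintype G] (h : minGen G ≤ 1) :
    IsCyclic G := by
  obtain ⟨S, hcard, hS⟩ := Nat.sInf_mem (s := {n : ℕ | ∃ S : Finset G, S.card = n ∧
    Subgroup.closure (S : Set G) = ⊤}) ⟨_, Finset.univ, rfl, by simp⟩
  obtain ⟨y, hy⟩ := Finset.card_le_one_iff_subset_singleton.mp (hcard.trans_le h)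
  refine isCyclic_iff_exists_zpowers_eq_top.mpr ⟨y, top_le_iff.mp ?_⟩
  rw [← hS, Subgroup.zpowers_eq_closure]
  exact Subgroup.closure_mono (by exact_mod_cast hy)

theorem exists_sq_eq_of_odd_card {H : Type*} [Group H] (hH : Odd (Nat.card H)) (z : H) :
    ∃ y : H, y ^ 2 = z :=
  ⟨(powCoprime hH.coprime_two_right).symm z, by
    rw [← powCoprime_apply hH.coprime_two_right, Equiv.apply_symm_apply]⟩

theorem closure_insert_ne_top_of_closure_le_ker {G Q : Type*} [Group G] [Group Q] {f : G →* Q}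
    (hf : Function.Surjective f) (hQ : ¬IsCyclic Q) {s : Set G}
    (hs : Subgroup.closure s ≤ f.ker) (g : G) : Subgroup.closure (insert g s) ≠ ⊤ := by
  intro htop
  have hle : Subgroup.closure (insert g s) ≤ (Subgroup.zpowers (f g)).comap f := by
    rw [Subgroup.closure_le, Set.insert_subset_iff]
    refine ⟨Subgroup.mem_zpowers (f g), fun x hx => ?_⟩
    rw [SetLike.mem_coe, Subgroup.mem_comap, f.mem_ker.mp (hs (Subgroup.subset_closure hx))]
    exact one_mem _
  refine hQ ⟨f g, fun q => ?_⟩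
  obtain ⟨x, rfl⟩ := hf q
  exact hle (htop ▸ Subgroup.mem_top x)

theorem odd_card_of_le_ker_fst {A B : Type*} [Group A] [Group B] (hB : Odd (Nat.card B))
    {S : Subgroup (A × B)} (hS : S ≤ (MonoidHom.fst A B).ker) : Odd (Nat.card S) := by
  refine hB.of_dvd_nat ((Subgroup.card_dvd_of_le hS).trans (dvd_of_eq ?_))
  rw [MonoidHom.ker_fst, Nat.card_congr (Subgroup.prodEquiv _ _).toEquiv, Nat.card_prod,
    Subgroup.card_bot, Subgroup.card_top, one_mul]

namespace IsKleinFour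

variable {K : Type*} [Group K] [IsKleinFour K]

theorem exists_ne_one_ne (a : K) : ∃ x : K, x ≠ 1 ∧ x ≠ a := by
  classical
  let _ := Fintype.ofFinite K
  obtain ⟨x, -, hx⟩ := Finset.exists_mem_notMem_of_card_lt_card (s := {1, a})
    (t := Finset.univ) (Finset.card_le_two.trans_lt (by simp))
  exact ⟨x, by simpa [not_or] using hx⟩

theorem closure_pair_eq_top {x y : K} (hx : x ≠ 1) (hy : y ≠ 1) (hxy : x ≠ y) :
    Subgroup.closure {x, y} = ⊤ := by
  have hxS : x ∈ Subgroup.closure {x, y} := Subgroup.subset_closure (by simp)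
  have hyS : y ∈ Subgroup.closure {x, y} := Subgroup.subset_closure (by simp)
  refine (Subgroup.eq_top_iff' _).mpr fun z => ?_
  by_cases hz : z = 1
  · exact hz ▸ one_mem _
  by_cases hzx : z = x
  · exact hzx ▸ hxS
  by_cases hzy : z = y
  · exact hzy ▸ hyS
  exact eq_mul_of_ne_all hx hy hxy hz hzx hzy ▸ mul_mem hxS hyS

theorem two_dvd_card_of_not_le_ker_fst {B : Type*} [Group B] {S : Subgroup (K × B)}
    (hS : ¬S ≤ (MonoidHom.fst K B).ker) : 2 ∣ Nat.card S := by
  obtain ⟨t, htS, ht⟩ := SetLike.not_le_iff_exists.mp hS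
  have ht₂ : orderOf t.1 = 2 :=
    orderOf_eq_prime (by rw [sq, mul_self]) (by simpa [Subgroup.mem_prod] using ht)
  calc 2 = orderOf t.1 := ht₂.symm
    _ ∣ orderOf t := orderOf_fst_dvd_orderOf
    _ = orderOf (⟨t, htS⟩ : S) := (Subgroup.orderOf_mk t htS).symm
    _ ∣ Nat.card S := orderOf_dvd_natCard _

/-- The witness is `(x, y)` with `x ∉ {1, a}` for some `(a, b) ∈ ⟨s⟩` with `a ≠ 1`, and `y²`
generating `H`: then `(x, y)² = (1, y²)` generates `1 × H`, and `a`, `x` generate `K`. -/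
theorem exists_closure_insert_eq_top {H : Type*} [Group H] [IsCyclic H] (hH : Odd (Nat.card H))
    {s : Set (K × H)} (hs : ¬Subgroup.closure s ≤ (MonoidHom.fst K H).ker) :
    ∃ g, Subgroup.closure (insert g s) = ⊤ := by
  obtain ⟨⟨a, b⟩, ht, ha⟩ := SetLike.not_le_iff_exists.mp hs
  replace ha : a ≠ 1 := by simpa [Subgroup.mem_prod] using ha
  obtain ⟨z, hz⟩ := IsCyclic.exists_generator (α := H)
  obtain ⟨y, rfl⟩ := exists_sq_eq_of_odd_card hH z
  obtain ⟨x, hx1, hxt⟩ := exists_ne_one_ne a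
  refine ⟨(x, y), ?_⟩
  set T := Subgroup.closure (insert (x, y) s)
  have hxyT : (x, y) ∈ T := Subgroup.subset_closure (Set.mem_insert _ _)
  have hinr : ∀ b : H, ((1 : K), b) ∈ T := by
    have hle : Subgroup.zpowers ((1 : K), y ^ 2) ≤ T :=
      Subgroup.zpowers_le.mpr (by simpa [sq, mul_self] using mul_mem hxyT hxyT)
    intro c
    obtain ⟨n, rfl⟩ := Subgroup.mem_zpowers_iff.mp (hz c)
    exact hle ⟨n, by simp⟩
  have hinl : ∀ a : K, (a, (1 : H)) ∈ T := by
    have hle : Subgroup.closure {a, x} ≤ T.comap (MonoidHom.inl K H) := by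
      rw [Subgroup.closure_le, Set.insert_subset_iff, Set.singleton_subset_iff]
      exact ⟨by simpa using mul_mem (Subgroup.closure_mono (Set.subset_insert _ _) ht) (hinr b⁻¹),
        by simpa using mul_mem hxyT (hinr y⁻¹)⟩
    exact fun c => hle (closure_pair_eq_top ha hx1 hxt.symm ▸ Subgroup.mem_top c)
  refine (Subgroup.eq_top_iff' _).mpr fun ab => ?_
  simpa using mul_mem (hinl ab.1) (hinr ab.2)

end IsKleinFour

-- `genGame` adds elements using classical decidable equality; `insert` below must agree with it.
attribute [local instance 2000] Classical.propDecidable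

theorem toNimber_one_ne_zero : ∗(1 : Ordinal.{u}) ≠ ∗0 := toNimber.injective.ne one_ne_zero

def KleinGrundySpec {K H : Type} [Group K] [Fintype K] [Group H] [Fintype H]
    (P : Finset (K × H)) : Prop :=
  Subgroup.closure (P : Set (K × H)) ≠ ⊤ →
    (grundyValue (genGame P) = ∗1 ↔ Even P.card) ∧
    (Odd P.card → Subgroup.closure (P : Set (K × H)) ≤ (MonoidHom.fst K H).ker →
      grundyValue (genGame P) = ∗0)

section KleinProd

variable {K H : Type} [Group K] [IsKleinFour K] [Fintype K] [Group H] [Fintype H]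
  {P : Finset (K × H)} (ih : ∀ g ∉ P, KleinGrundySpec (insert g P))
include ih

theorem grundyValue_eq_zero_of_odd_of_le_ker (hP : Subgroup.closure (P : Set (K × H)) ≠ ⊤)
    (hodd : Odd P.card) (hker : Subgroup.closure (P : Set (K × H)) ≤ (MonoidHom.fst K H).ker) :
    grundyValue (genGame P) = ∗0 := by
  refine grundyValue_genGame_eq_zero hP fun g hg => ?_
  have hg' : Subgroup.closure (↑(insert g P) : Set (K × H)) ≠ ⊤ := by
    rw [Finset.coe_insert]
    exact closure_insert_ne_top_of_closure_le_ker Prod.fst_surjective IsKleinFour.not_isCyclic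
      hker g
  rw [((ih g hg hg').1).mpr (Finset.card_insert_of_notMem hg ▸ hodd.add_one)]
  exact toNimber_one_ne_zero

theorem grundyValue_ne_one_of_odd (hP : Subgroup.closure (P : Set (K × H)) ≠ ⊤)
    (hodd : Odd P.card) : grundyValue (genGame P) ≠ ∗1 := by
  by_cases hker : Subgroup.closure (P : Set (K × H)) ≤ (MonoidHom.fst K H).ker
  · rw [grundyValue_eq_zero_of_odd_of_le_ker ih hP hodd hker]
    exact toNimber_one_ne_zero.symm
  have hcard : P.card ≠ Nat.card (Subgroup.closure (P : Set (K × H))) := fun h =>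
    Nat.not_even_iff_odd.mpr hodd (h ▸ even_iff_two_dvd.mpr
      (IsKleinFour.two_dvd_card_of_not_le_ker_fst hker))
  obtain ⟨g, hg, hgP⟩ := exists_notMem_closure_insert_eq hcard
  have hone := ((ih g hg (hgP ▸ hP)).1).mpr (Finset.card_insert_of_notMem hg ▸ hodd.add_one)
  exact hone ▸ (grundyValue_genGame_insert_ne hP hg).symm

theorem grundyValue_eq_one_of_even [IsCyclic H] (hH : Odd (Nat.card H))
    (hP : Subgroup.closure (P : Set (K × H)) ≠ ⊤) (heven : Even P.card) :
    grundyValue (genGame P) = ∗1 := by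
  refine grundyValue_genGame_eq_one hP ?_ fun g hg => ?_
  · by_cases hker : Subgroup.closure (P : Set (K × H)) ≤ (MonoidHom.fst K H).ker
    · have hcard : P.card ≠ Nat.card (Subgroup.closure (P : Set (K × H))) := fun h =>
        Nat.not_even_iff_odd.mpr (odd_card_of_le_ker_fst hH hker) (h ▸ heven)
      obtain ⟨g, hg, hgP⟩ := exists_notMem_closure_insert_eq hcard
      exact ⟨g, hg, (ih g hg (hgP ▸ hP)).2
        (Finset.card_insert_of_notMem hg ▸ heven.add_one) (hgP ▸ hker)⟩
    · obtain ⟨g, hg⟩ := IsKleinFour.exists_closure_insert_eq_top hH hker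
      have hgP : g ∉ P := fun hgP => hP (by rwa [Set.insert_eq_of_mem hgP] at hg)
      exact ⟨g, hgP, grundyValue_genGame_of_closure_eq_top (by rwa [Finset.coe_insert])⟩
  · by_cases htop : Subgroup.closure (↑(insert g P) : Set (K × H)) = ⊤
    · rw [grundyValue_genGame_of_closure_eq_top htop]
      exact toNimber_one_ne_zero.symm
    · rw [Ne, (ih g hg htop).1, Finset.card_insert_of_notMem hg, Nat.even_add_one]
      exact not_not.mpr heven

theorem kleinGrundySpec_of_forall_insert [IsCyclic H] (hH : Odd (Nat.card H)) :
    KleinGrundySpec P := fun hP =>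
  ⟨⟨fun h => Nat.not_odd_iff_even.mp fun hodd => grundyValue_ne_one_of_odd ih hP hodd h,
      grundyValue_eq_one_of_even ih hH hP⟩,
    grundyValue_eq_zero_of_odd_of_le_ker ih hP⟩

end KleinProd

theorem kleinGrundySpec {K H : Type} [Group K] [IsKleinFour K] [Fintype K] [Group H] [IsCyclic H]
    [Fintype H] (hH : Odd (Nat.card H)) (P : Finset (K × H)) : KleinGrundySpec P :=
  Finset.strongDownwardInduction (p := KleinGrundySpec) (n := Fintype.card (K × H))
    (fun _ ih _ => kleinGrundySpec_of_forall_insert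
      (fun _ hg => ih (Finset.card_le_univ _) (Finset.ssubset_insert hg)) hH)
    P (Finset.card_le_univ P)

theorem nimGEN_prod_eq_one {K H : Type} [Group K] [IsKleinFour K] [Fintype K] [Group H]
    [IsCyclic H] [Fintype H] (hH : Odd (Nat.card H)) : nimGEN (K × H) = ∗1 := by
  have : Nontrivial K := Finite.one_lt_card_iff_nontrivial.mp (by simp)
  have hempty : Subgroup.closure ((∅ : Finset (K × H)) : Set (K × H)) ≠ ⊤ := by
    rw [Finset.coe_empty, Subgroup.closure_empty]
    exact bot_ne_top
  exact ((kleinGrundySpec hH ∅ hempty).1).mpr (by simp)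

instance : IsKleinFour (Multiplicative (ZMod 2) × Multiplicative (ZMod 2)) where
  card_four := by simp
  exponent_two := by simp [Monoid.exponent_prod]

theorem nimGEN_Z2sq_times_odd_of_minGen_le_one (H : Type) [Group H] [Fintype H]
    (hH : Odd (Fintype.card H)) (hd : minGen H ≤ 1) :
    nimGEN ((Multiplicative (ZMod 2) × Multiplicative (ZMod 2)) × H) = ∗1 :=
  have := isCyclic_of_minGen_le_one hd
  nimGEN_prod_eq_one (Nat.card_eq_fintype_card (α := H) ▸ hH)
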